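/- arXiv:2507.07805 — 2 statements merged into one kernel-verified Lean document; each statement's English description precedes it below -/
import Mathlib

section
/- Let Ω ⊂ ℝⁿ be a convex control invariant set with 0 ∈ int(Ω), Ω compact, for the system x⁺ = Ax + Bu with input set U. Define h(x) = 1 − γ_Ω(x) with γ_Ω the Minkowski gauge of Ω. Then for every x ∈ Ω there exists u ∈ U with h(Ax + Bu) ≥ h(x). -/
open Pointwise

/-- For a convex compact control invariant set `Ω` with `0 ∈ int Ω`, the set-based CBF
`h(x) = 1 - γ_Ω(x)` satisfies: for every `x ∈ Ω` there exists `u ∈ U` with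
`h(Ax + Bu) ≥ h(x)`. -/
theorem set_based_cbf_nondecrease (n m : ℕ)
    (A : Matrix (Fin n) (Fin n) ℝ) (B : Matrix (Fin n) (Fin m) ℝ)
    (U : Set (Fin m → ℝ)) (Ω : Set (Fin n → ℝ))
    (hUconv : Convex ℝ U) (hU0 : (0 : Fin m → ℝ) ∈ U)
    (hΩconv : Convex ℝ Ω) (hΩcomp : IsCompact Ω)
    (h0 : (0 : Fin n → ℝ) ∈ interior Ω)
    (hinv : ∀ x ∈ Ω, ∃ u ∈ U, A.mulVec x + B.mulVec u ∈ Ω) :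
    ∀ x ∈ Ω, ∃ u ∈ U,
      1 - sInf {γ : ℝ | 0 ≤ γ ∧ A.mulVec x + B.mulVec u ∈ γ • Ω}
        ≥ 1 - sInf {γ : ℝ | 0 ≤ γ ∧ x ∈ γ • Ω} := by
  intro x hx
  have hΩ0 : (0 : Fin n → ℝ) ∈ Ω := interior_subset h0
  have hΩne : Ω.Nonempty := ⟨0, hΩ0⟩
  have hΩnhds : Ω ∈ nhds (0 : Fin n → ℝ) := mem_interior_iff_mem_nhds.mp h0
  have habs : Absorbent ℝ Ω := absorbent_nhds_zero hΩnhds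
  have hbdd : Bornology.IsVonNBounded ℝ Ω :=
    (NormedSpace.isVonNBounded_iff ℝ).mpr hΩcomp.isBounded
  -- basic facts about the sets whose inf we take
  have hbelow : ∀ z : Fin n → ℝ, BddBelow {γ : ℝ | 0 ≤ γ ∧ z ∈ γ • Ω} :=
    fun z => ⟨0, fun γ hγ => hγ.1⟩
  have hmem1 : ∀ z ∈ Ω, (1 : ℝ) ∈ {γ : ℝ | 0 ≤ γ ∧ z ∈ γ • Ω} := by
    intro z hz
    exact ⟨zero_le_one, by simpa using hz⟩
  by_cases hx0 : x = 0
  · -- trivial case x = 0 : use u = 0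
    refine ⟨0, hU0, ?_⟩
    have hnew : A.mulVec x + B.mulVec 0 = 0 := by
      simp [hx0, Matrix.mulVec_zero]
    have h0mem : (0 : ℝ) ∈ {γ : ℝ | 0 ≤ γ ∧ A.mulVec x + B.mulVec 0 ∈ γ • Ω} := by
      refine ⟨le_refl 0, ?_⟩
      rw [hnew, Set.zero_smul_set hΩne]
      exact rfl
    have h1 : sInf {γ : ℝ | 0 ≤ γ ∧ A.mulVec x + B.mulVec 0 ∈ γ • Ω} ≤ 0 :=
      csInf_le (hbelow _) h0mem
    have h2 : (0 : ℝ) ≤ sInf {γ : ℝ | 0 ≤ γ ∧ x ∈ γ • Ω} :=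
      le_csInf ⟨1, hmem1 x hx⟩ fun b hb => hb.1
    linarith
  · -- main case : x ≠ 0
    set g := gauge Ω x with hg
    have hSet : {γ : ℝ | 0 ≤ γ ∧ x ∈ γ • Ω} = {r ∈ Set.Ioi (0 : ℝ) | x ∈ r • Ω} := by
      ext γ
      constructor
      · rintro ⟨hγ0, hγ⟩
        rcases lt_or_eq_of_le hγ0 with h | h
        · exact ⟨h, hγ⟩
        · exfalso
          rw [← h, Set.zero_smul_set hΩne] at hγ
          exact hx0 hγ
      · rintro ⟨hγ0, hγ⟩
        exact ⟨le_of_lt hγ0, hγ⟩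
    have hSinf : sInf {γ : ℝ | 0 ≤ γ ∧ x ∈ γ • Ω} = g := by
      rw [hSet, hg, gauge_def]
    have hg1 : g ≤ 1 := gauge_le_one_of_mem hx
    have hgpos : 0 < g := (gauge_pos habs hbdd).mpr hx0
    -- the scaled point y = g⁻¹ • x lies in Ω
    set y : Fin n → ℝ := g⁻¹ • x with hy
    have hyΩ : y ∈ Ω := by
      have hgy : gauge Ω y ≤ 1 := by
        rw [hy, gauge_smul_of_nonneg (inv_nonneg.mpr hgpos.le), smul_eq_mul, ← hg,
          inv_mul_cancel₀ hgpos.ne']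
      have := (gauge_le_one_iff_mem_closure hΩconv hΩnhds).mp hgy
      rwa [hΩcomp.isClosed.closure_eq] at this
    have hxy : x = g • y := by
      rw [hy, smul_inv_smul₀ hgpos.ne']
    obtain ⟨u₀, hu₀U, hu₀⟩ := hinv y hyΩ
    refine ⟨g • u₀, ?_, ?_⟩
    · -- g • u₀ ∈ U by convexity with 0 ∈ U, 0 ≤ g ≤ 1
      have := hUconv hu₀U hU0 hgpos.le (by linarith : (0:ℝ) ≤ 1 - g) (by ring)
      simpa using this
    · -- g belongs to the new set, so its inf is ≤ g
      have hmemg : g ∈ {γ : ℝ | 0 ≤ γ ∧ A.mulVec x + B.mulVec (g • u₀) ∈ γ • Ω} := by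
        refine ⟨hgpos.le, ?_⟩
        have : A.mulVec x + B.mulVec (g • u₀) = g • (A.mulVec y + B.mulVec u₀) := by
          rw [hxy]; simp [Matrix.mulVec_smul, smul_add]
        rw [this]
        exact Set.smul_mem_smul_set hu₀
      have h1 : sInf {γ : ℝ | 0 ≤ γ ∧ A.mulVec x + B.mulVec (g • u₀) ∈ γ • Ω} ≤ g :=
        csInf_le (hbelow _) hmemg
      rw [hSinf]
      linarith
end

section
/- Let Ω be a polytope in vertex representation with vertices v₀ = 0, v₁, …, v_N, i.e., Ω = {Σᵢ λᵢ vᵢ | λᵢ ≥ 0, Σᵢ λᵢ = 1}. Then for every x ∈ Ω, the minimal scaling γ_Ω(x) = min{γ ≥ 0 | x ∈ γΩ} equals the optimal value of min{1 − λ₀ | x = Σᵢ λᵢ vᵢ, Σᵢ λᵢ = 1, λᵢ ≥ 0}. -/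
open Pointwise

/-- Gauge of a V-representation polytope with vertex `v 0 = 0`: for `x ∈ Ω`, the
minimal scaling equals the optimal value of `min 1 - λ₀` over feasible convex
combinations. -/
theorem gauge_polytope_v_rep (n N : ℕ) (v : Fin (N + 1) → (Fin n → ℝ))
    (hv0 : v 0 = 0) :
    ∀ x ∈ {y : Fin n → ℝ | ∃ lam : Fin (N + 1) → ℝ,
        (∀ i, 0 ≤ lam i) ∧ (∑ i, lam i) = 1 ∧ y = ∑ i, lam i • v i},
      sInf {γ : ℝ | 0 ≤ γ ∧ x ∈ γ • {y : Fin n → ℝ | ∃ lam : Fin (N + 1) → ℝ,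
          (∀ i, 0 ≤ lam i) ∧ (∑ i, lam i) = 1 ∧ y = ∑ i, lam i • v i}}
        = sInf {t : ℝ | ∃ lam : Fin (N + 1) → ℝ,
            (∀ i, 0 ≤ lam i) ∧ (∑ i, lam i) = 1 ∧ x = ∑ i, lam i • v i ∧ t = 1 - lam 0} := by
  intro x hx
  set Ω := {y : Fin n → ℝ | ∃ lam : Fin (N + 1) → ℝ,
      (∀ i, 0 ≤ lam i) ∧ (∑ i, lam i) = 1 ∧ y = ∑ i, lam i • v i} with hΩ
  set Γ := {γ : ℝ | 0 ≤ γ ∧ x ∈ γ • Ω} with hΓ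
  set T := {t : ℝ | ∃ lam : Fin (N + 1) → ℝ,
      (∀ i, 0 ≤ lam i) ∧ (∑ i, lam i) = 1 ∧ x = ∑ i, lam i • v i ∧ t = 1 - lam 0} with hT
  obtain ⟨lam₀, h₀nn, h₀sum, h₀x⟩ := hx
  -- basic fact: for feasible lam, lam 0 ≤ 1
  have hlam0le : ∀ lam : Fin (N + 1) → ℝ, (∀ i, 0 ≤ lam i) → (∑ i, lam i) = 1 →
      lam 0 ≤ 1 := by
    intro lam hnn hsum
    calc lam 0 ≤ ∑ i, lam i := Finset.single_le_sum (fun i _ => hnn i) (Finset.mem_univ 0)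
    _ = 1 := hsum
  have hTne : T.Nonempty := ⟨1 - lam₀ 0, lam₀, h₀nn, h₀sum, h₀x, rfl⟩
  have hΓbdd : BddBelow Γ := ⟨0, fun γ hγ => hγ.1⟩
  have hTbdd : BddBelow T := by
    refine ⟨0, fun t ht => ?_⟩
    obtain ⟨lam, hnn, hsum, -, hteq⟩ := ht
    have := hlam0le lam hnn hsum
    linarith
  -- T ⊆ Γ
  have hsub : T ⊆ Γ := by
    rintro t ⟨lam, hnn, hsum, hxeq, hteq⟩
    have ht0 : 0 ≤ t := by have := hlam0le lam hnn hsum; linarith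
    have hsucc : ∑ i : Fin N, lam i.succ = t := by
      have := Fin.sum_univ_succ lam
      rw [hsum] at this
      linarith
    have hxsum : x = ∑ i : Fin N, lam i.succ • v i.succ := by
      rw [hxeq, Fin.sum_univ_succ, hv0, smul_zero, zero_add]
    refine ⟨ht0, ?_⟩
    rcases eq_or_lt_of_le ht0 with h | h
    · -- t = 0 : all lam i.succ = 0, x = 0
      have hall : ∀ i : Fin N, lam i.succ = 0 := by
        intro i
        have := (Finset.sum_eq_zero_iff_of_nonneg
          (fun i _ => hnn (Fin.succ i))).mp (by rw [hsucc, ← h])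
        exact this i (Finset.mem_univ i)
      have hx0 : x = 0 := by
        rw [hxsum]
        refine Finset.sum_eq_zero fun i _ => by rw [hall i, zero_smul]
      refine Set.mem_smul_set.mpr ⟨x, ⟨lam₀, h₀nn, h₀sum, h₀x⟩, ?_⟩
      rw [← h, hx0, zero_smul]
    · -- t > 0
      set μ : Fin (N + 1) → ℝ := Fin.cases 0 (fun i => lam i.succ / t) with hμ
      have hμ0 : μ 0 = 0 := rfl
      have hμs : ∀ i : Fin N, μ i.succ = lam i.succ / t := fun i => rfl
      refine Set.mem_smul_set.mpr ⟨∑ i, μ i • v i, ⟨μ, ?_, ?_, rfl⟩, ?_⟩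
      · intro i
        induction i using Fin.cases with
        | zero => rw [hμ0]
        | succ i => rw [hμs]; exact div_nonneg (hnn i.succ) ht0
      · rw [Fin.sum_univ_succ, hμ0, zero_add]
        simp only [hμs]
        rw [← Finset.sum_div, hsucc, div_self h.ne']
      · rw [hxsum, Finset.smul_sum, Fin.sum_univ_succ, hμ0, hv0,
          smul_zero, smul_zero, zero_add]
        refine Finset.sum_congr rfl fun i _ => ?_
        rw [hμs, smul_smul, mul_div_cancel₀ _ h.ne']
  -- for each γ ∈ Γ there is t ∈ T with t ≤ γ
  have hexle : ∀ γ ∈ Γ, ∃ t ∈ T, t ≤ γ := by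
    rintro γ ⟨hγ0, hγx⟩
    rcases le_or_gt 1 γ with h1 | h1
    · refine ⟨1 - lam₀ 0, ⟨lam₀, h₀nn, h₀sum, h₀x, rfl⟩, ?_⟩
      have := h₀nn 0
      linarith
    · obtain ⟨y, ⟨μ, hμnn, hμsum, hμy⟩, hyx⟩ := Set.mem_smul_set.mp hγx
      set lam : Fin (N + 1) → ℝ :=
        Fin.cases (1 - γ + γ * μ 0) (fun i => γ * μ i.succ) with hlam
      have hl0 : lam 0 = 1 - γ + γ * μ 0 := rfl
      have hls : ∀ i : Fin N, lam i.succ = γ * μ i.succ := fun i => rfl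
      have hμ0le : μ 0 ≤ 1 := hlam0le μ hμnn hμsum
      refine ⟨1 - lam 0, ⟨lam, ?_, ?_, ?_, rfl⟩, ?_⟩
      · intro i
        induction i using Fin.cases with
        | zero =>
          rw [hl0]
          have : 0 ≤ γ * μ 0 := mul_nonneg hγ0 (hμnn 0)
          linarith
        | succ i => rw [hls]; exact mul_nonneg hγ0 (hμnn i.succ)
      · rw [Fin.sum_univ_succ, hl0]
        simp only [hls]
        rw [← Finset.mul_sum]
        have : ∑ i : Fin N, μ i.succ = 1 - μ 0 := by
          have := Fin.sum_univ_succ μ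
          rw [hμsum] at this
          linarith
        rw [this]
        ring
      · rw [← hyx, hμy, Finset.smul_sum, Fin.sum_univ_succ, Fin.sum_univ_succ, hv0]
        simp only [hl0, hls, smul_zero, smul_smul, zero_add]
      · rw [hl0]
        have : 0 ≤ γ * μ 0 := mul_nonneg hγ0 (hμnn 0)
        linarith
  exact csInf_eq_csInf_of_forall_exists_le hexle
    (fun t ht => ⟨t, hsub ht, le_refl t⟩)
end
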